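/- Let x : [0,+∞) → ℝⁿ be the solution of the network (NN) with initial point x₀ ∈ X, suppose Assumption 1 holds, let x̄ be an accumulation point of x(·), and set X̄ = {y ∈ X : y_i = 0 for all i ∈ I(x̄) ∪ J(x̄)}. Let x* be a global minimizer of f over X̄ satisfying x* = P_{X̄}(x* − ∇f(x*)). Then x* is a local minimizer of problem (P): minimize f(x) + λ‖x‖₀ over X. Moreover, if J(x̄) ≠ ∅, then ‖x*‖₀ < ‖x̄‖₀ and f(x*) + λ‖x*‖₀ < f(x̄) + λ‖x̄‖₀. -/

import Mathlib

open Filter Set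
open scoped NNReal

/-- The spare-smoothing kernel θ(s,μ). -/
noncomputable def phi (s μ : ℝ) : ℝ :=
  if s < μ / 3 then 3 / (2 * μ) * s
  else if s ≤ μ then -(9 / (8 * μ ^ 2)) * (s - μ) ^ 2 + 1
  else 1

/-- ∂θ/∂s(s,μ). -/
noncomputable def phiS (s μ : ℝ) : ℝ :=
  if s < μ / 3 then 3 / (2 * μ)
  else if s ≤ μ then 9 / (4 * μ ^ 2) * (μ - s)
  else 0

/-- ∂θ/∂μ(s,μ) (for s ≥ 0). -/
noncomputable def phiM (s μ : ℝ) : ℝ :=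
  if 3 * s < μ then -(3 * s) / (2 * μ ^ 2)
  else if s ≤ μ then -(9 * (μ - s) * s) / (4 * μ ^ 3)
  else 0

/-- Θ(x,μ) = Σ_i θ(x_i,μ). -/
noncomputable def Phi {n : ℕ} (x : EuclideanSpace ℝ (Fin n)) (μ : ℝ) : ℝ :=
  ∑ i, phi (x i) μ

/-- ∇ₓΘ(x,μ), the gradient of Θ(·,μ). -/
noncomputable def gradPhi {n : ℕ} (x : EuclideanSpace ℝ (Fin n)) (μ : ℝ) :
    EuclideanSpace ℝ (Fin n) := WithLp.toLp 2 (fun i => phiS (x i) μ)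

/-- ‖x‖₀, the number of nonzero entries of x. -/
noncomputable def norm0 {n : ℕ} (x : EuclideanSpace ℝ (Fin n)) : ℕ :=
  Nat.card {i // x i ≠ 0}

/-- μ(t) = (α₀/(t+1)^β + μ*)/2. -/
noncomputable def muFun (α₀ β μs t : ℝ) : ℝ := (α₀ / (t + 1) ^ β + μs) / 2

/-! Let ȳ be `x̄` with its coordinates below `μ*/2` set to zero. Then `ȳ ∈ X̄` and `ȳ` moves each
coordinate of `x̄` by at most `μ*/2`, so the mean value theorem with `‖∇f‖_∞ ≤ L_f` and Assumption 1
give `f(x*) ≤ f(ȳ) ≤ f(x̄) + n L_f μ*/2 < f(x̄) + λ`. A point of `X` near `x*` keeps the nonzero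
coordinates of `x*`; it either lies in the face `X̄`, where `f ≥ f(x*)`, or has an extra nonzero
coordinate, whose cost `λ` in the `ℓ₀` term outweighs a loss of less than `λ` in `f`. The same
trade-off between `x*` and `x̄`, which is nonzero on `J(x̄)` while `x*` vanishes there, gives the
second claim. -/

open Topology

section Box

variable {ι : Type*}

lemma box_eq_iInter (v : EuclideanSpace ℝ ι) :
    {x : EuclideanSpace ℝ ι | ∀ i, 0 ≤ x i ∧ x i ≤ v i} =
      ⋂ i, EuclideanSpace.proj i ⁻¹' Icc 0 (v i) := by
  ext x
  simp

lemma isClosed_box (v : EuclideanSpace ℝ ι) :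
    IsClosed {x : EuclideanSpace ℝ ι | ∀ i, 0 ≤ x i ∧ x i ≤ v i} := by
  rw [box_eq_iInter]
  exact isClosed_iInter fun i => isClosed_Icc.preimage (EuclideanSpace.proj i).continuous

lemma convex_box (v : EuclideanSpace ℝ ι) :
    Convex ℝ {x : EuclideanSpace ℝ ι | ∀ i, 0 ≤ x i ∧ x i ≤ v i} := by
  rw [box_eq_iInter]
  exact convex_iInter fun i =>
    (convex_Icc 0 (v i)).linear_preimage (EuclideanSpace.proj i).toLinearMap

end Box

section Euclidean

variable {ι : Type*} [Fintype ι]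

lemma EuclideanSpace.norm_le_sqrt_card_mul {w : EuclideanSpace ℝ ι} {c : ℝ} (hc : 0 ≤ c)
    (h : ∀ i, |w i| ≤ c) : ‖w‖ ≤ √(Fintype.card ι) * c := by
  rw [EuclideanSpace.norm_eq, ← Real.sqrt_sq hc, ← Real.sqrt_mul (Nat.cast_nonneg _)]
  gcongr
  calc ∑ i, ‖w i‖ ^ 2 ≤ ∑ _i : ι, c ^ 2 := by
        gcongr with i
        exact h i
    _ = Fintype.card ι * c ^ 2 := by simp

lemma Convex.abs_sub_le_of_abs_gradient_le {f : EuclideanSpace ℝ ι → ℝ}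
    {f' : EuclideanSpace ℝ ι → EuclideanSpace ℝ ι} {s : Set (EuclideanSpace ℝ ι)}
    (hs : Convex ℝ s) (hf : ∀ y, HasGradientAt f (f' y) y) {L c : ℝ} (hL : 0 ≤ L) (hc : 0 ≤ c)
    (hf' : ∀ y ∈ s, ∀ i, |f' y i| ≤ L) {a b : EuclideanSpace ℝ ι} (ha : a ∈ s) (hb : b ∈ s)
    (hab : ∀ i, |b i - a i| ≤ c) : |f b - f a| ≤ Fintype.card ι * L * c := by
  have hmvt := hs.norm_image_sub_le_of_norm_hasFDerivWithin_le
    (f' := fun y => InnerProductSpace.toDual ℝ _ (f' y))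
    (fun y _ => (hf y).hasFDerivAt.hasFDerivWithinAt)
    (fun y hy => by
      rw [LinearIsometryEquiv.norm_map]
      exact EuclideanSpace.norm_le_sqrt_card_mul hL (hf' y hy))
    ha hb
  have hba : ‖b - a‖ ≤ √(Fintype.card ι) * c := EuclideanSpace.norm_le_sqrt_card_mul hc hab
  calc |f b - f a| ≤ √(Fintype.card ι) * L * ‖b - a‖ := hmvt
    _ ≤ √(Fintype.card ι) * L * (√(Fintype.card ι) * c) := by gcongr
    _ = Fintype.card ι * L * c := by
      rw [mul_mul_mul_comm, Real.mul_self_sqrt (Nat.cast_nonneg _)]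
      ring

lemma eventually_apply_ne_zero_of_apply_ne_zero (x : EuclideanSpace ℝ ι) :
    ∀ᶠ y in 𝓝 x, ∀ i, x i ≠ 0 → y i ≠ 0 := by
  rw [eventually_all]
  intro i
  by_cases hi : x i = 0
  · exact Eventually.of_forall fun _ h => absurd hi h
  · filter_upwards [(EuclideanSpace.proj i).continuous.continuousAt.eventually_ne hi] with y hy _
    exact hy

end Euclidean

noncomputable def truncBelow {ι : Type*} (c : ℝ) (x : EuclideanSpace ℝ ι) : EuclideanSpace ℝ ι :=
  WithLp.toLp 2 fun i => if x i < c then 0 else x i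

section Trunc

variable {ι : Type*} {c : ℝ} {x : EuclideanSpace ℝ ι}

@[simp]
lemma truncBelow_apply (i : ι) : truncBelow c x i = if x i < c then 0 else x i := rfl

lemma truncBelow_mem_box {v : EuclideanSpace ℝ ι}
    (hx : x ∈ {x : EuclideanSpace ℝ ι | ∀ i, 0 ≤ x i ∧ x i ≤ v i}) :
    truncBelow c x ∈ {x : EuclideanSpace ℝ ι | ∀ i, 0 ≤ x i ∧ x i ≤ v i} := by
  intro i
  have := hx i
  simp only [truncBelow_apply]
  split_ifs <;> constructor <;> linarith

lemma abs_truncBelow_sub_le (hc : 0 ≤ c) (hx : ∀ i, 0 ≤ x i) (i : ι) :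
    |truncBelow c x i - x i| ≤ c := by
  have := hx i
  simp only [truncBelow_apply]
  split_ifs
  · rw [zero_sub, abs_neg, abs_of_nonneg this]
    linarith
  · simpa using hc

end Trunc

section Norm0

variable {n : ℕ} {a b : EuclideanSpace ℝ (Fin n)}

lemma norm0_eq_ncard (a : EuclideanSpace ℝ (Fin n)) : norm0 a = {i | a i ≠ 0}.ncard :=
  Nat.card_coe_set_eq _

lemma norm0_le_norm0 (h : ∀ i, a i ≠ 0 → b i ≠ 0) : norm0 a ≤ norm0 b := by
  rw [norm0_eq_ncard, norm0_eq_ncard]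
  exact Set.ncard_le_ncard h

lemma norm0_lt_norm0 (h : ∀ i, a i ≠ 0 → b i ≠ 0) {i : Fin n} (ha : a i = 0) (hb : b i ≠ 0) :
    norm0 a < norm0 b := by
  rw [norm0_eq_ncard, norm0_eq_ncard]
  exact Set.ncard_lt_ncard ⟨h, fun hba => hba hb ha⟩

lemma add_mul_norm0_lt_of_norm0_lt {fa fb lam : ℝ} (hlam : 0 ≤ lam) (hf : fa < fb + lam)
    (h : norm0 a < norm0 b) : fa + lam * norm0 a < fb + lam * norm0 b := by
  have h1 : (norm0 a : ℝ) + 1 ≤ norm0 b := by exact_mod_cast h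
  nlinarith

lemma isLocalMinOn_add_mul_norm0 {f : EuclideanSpace ℝ (Fin n) → ℝ}
    {X : Set (EuclideanSpace ℝ (Fin n))} {Z : Set (Fin n)} {lam : ℝ} (hlam : 0 < lam)
    (hf : ContinuousAt f a) (ha : ∀ i ∈ Z, a i = 0)
    (hmin : ∀ y ∈ X, (∀ i ∈ Z, y i = 0) → f a ≤ f y) :
    IsLocalMinOn (fun y => f y + lam * (norm0 y : ℝ)) X a := by
  have hnear : ∀ᶠ y in 𝓝 a, f a - lam < f y := hf.eventually (lt_mem_nhds (sub_lt_self _ hlam))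
  filter_upwards [nhdsWithin_le_nhds (hnear.and (eventually_apply_ne_zero_of_apply_ne_zero a)),
    self_mem_nhdsWithin] with y ⟨hfy, hsupp⟩ hyX
  by_cases hface : ∀ i ∈ Z, y i = 0
  · have := Nat.cast_le (α := ℝ).2 (norm0_le_norm0 hsupp)
    have := hmin y hyX hface
    nlinarith
  · obtain ⟨i, hiZ, hyi⟩ := not_forall₂.1 hface
    exact (add_mul_norm0_lt_of_norm0_lt hlam.le (by linarith)
      (norm0_lt_norm0 hsupp (ha i hiZ) hyi)).le

end Norm0

theorem stmt18_general {n : ℕ}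
    (v : EuclideanSpace ℝ (Fin n))
    (X : Set (EuclideanSpace ℝ (Fin n)))
    (hX : X = {x : EuclideanSpace ℝ (Fin n) | ∀ i, 0 ≤ x i ∧ x i ≤ v i})
    (f : EuclideanSpace ℝ (Fin n) → ℝ)
    (f' : EuclideanSpace ℝ (Fin n) → EuclideanSpace ℝ (Fin n))
    (hf : ∀ y, HasGradientAt f (f' y) y)
    (lam μs : ℝ)
    (hlam : 0 < lam) (hμs : 0 < μs)
    (x : ℝ → EuclideanSpace ℝ (Fin n))
    (hxX : ∀ t ∈ Ici (0 : ℝ), x t ∈ X)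
    (hn : 0 < n)
    (Lf : ℝ) (hLf0 : 0 < Lf) (hLf : ∀ y ∈ X, ∀ i, |f' y i| ≤ Lf)
    (hA1 : (∀ i, v i ≠ 0 → μs < v i) ∧
      μs < 3 * lam / (2 * ((⨆ i, v i) + Lf)) ∧ μs < 2 * lam / (n * Lf))
    (xbar : EuclideanSpace ℝ (Fin n))
    (hacc : ∃ u : ℕ → ℝ, Tendsto u atTop atTop ∧ Tendsto (fun k => x (u k)) atTop (nhds xbar))
    (Xbar : Set (EuclideanSpace ℝ (Fin n)))
    (hXbar : Xbar = {y : EuclideanSpace ℝ (Fin n) | y ∈ X ∧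
      ∀ i, 0 ≤ xbar i → xbar i < μs / 2 → y i = 0})
    (xstar : EuclideanSpace ℝ (Fin n))
    (hmin : xstar ∈ Xbar ∧ ∀ y ∈ Xbar, f xstar ≤ f y) :
    IsLocalMinOn (fun y => f y + lam * (norm0 y : ℝ)) X xstar ∧
    ({i | μs / 6 ≤ xbar i ∧ xbar i < μs / 2}.Nonempty →
      norm0 xstar < norm0 xbar ∧
      f xstar + lam * (norm0 xstar : ℝ) < f xbar + lam * (norm0 xbar : ℝ)) := by
  subst hX hXbar
  obtain ⟨u, hu, hxu⟩ := hacc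
  have hxbarX : xbar ∈ _ := (isClosed_box v).mem_of_tendsto hxu
    ((hu.eventually_ge_atTop 0).mono fun k hk => hxX _ hk)
  have hxbar0 : ∀ i, 0 ≤ xbar i := fun i => (hxbarX i).1
  have hface : ∀ y ∈ {x : EuclideanSpace ℝ (Fin n) | ∀ i, 0 ≤ x i ∧ x i ≤ v i},
      (∀ i ∈ {i | xbar i < μs / 2}, y i = 0) → f xstar ≤ f y :=
    fun y hy hyZ => hmin.2 y ⟨hy, fun i _ hi => hyZ i hi⟩
  have hstar0 : ∀ i ∈ {i | xbar i < μs / 2}, xstar i = 0 := fun i hi => hmin.1.2 i (hxbar0 i) hi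
  have hcost : n * Lf * (μs / 2) < lam := by
    have := (lt_div_iff₀ (by positivity)).1 hA1.2.2
    linarith
  have htruncX := truncBelow_mem_box (c := μs / 2) hxbarX
  have hgap : f xstar < f xbar + lam := by
    have htrunc := (convex_box v).abs_sub_le_of_abs_gradient_le hf hLf0.le (by positivity) hLf
      hxbarX htruncX (abs_truncBelow_sub_le (by positivity) hxbar0)
    rw [Fintype.card_fin] at htrunc
    calc f xstar ≤ f (truncBelow (μs / 2) xbar) := hface _ htruncX fun i hi => if_pos hi
      _ < f xbar + lam := by linarith [(abs_le.1 htrunc).2]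
  refine ⟨isLocalMinOn_add_mul_norm0 hlam (hf xstar).differentiableAt.continuousAt hstar0 hface,
    fun ⟨i, hi₁, hi₂⟩ => ?_⟩
  have hsupp : ∀ j, xstar j ≠ 0 → xbar j ≠ 0 := fun j hj hbar =>
    hj (hstar0 j (show xbar j < μs / 2 by linarith))
  have hlt : norm0 xstar < norm0 xbar := norm0_lt_norm0 hsupp (hstar0 i hi₂) (by linarith)
  exact ⟨hlt, add_mul_norm0_lt_of_norm0_lt hlam.le hgap hlt⟩

theorem stmt18 {n : ℕ}
    (v : EuclideanSpace ℝ (Fin n)) (hv : ∀ i, 0 ≤ v i)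
    (X : Set (EuclideanSpace ℝ (Fin n)))
    (hX : X = {x : EuclideanSpace ℝ (Fin n) | ∀ i, 0 ≤ x i ∧ x i ≤ v i})
    (f : EuclideanSpace ℝ (Fin n) → ℝ)
    (f' : EuclideanSpace ℝ (Fin n) → EuclideanSpace ℝ (Fin n))
    (hf : ∀ y, HasGradientAt f (f' y) y)
    (hconv : ConvexOn ℝ univ f)
    (hlip : LocallyLipschitz f')
    (lam γ α₀ β μs : ℝ)
    (hlam : 0 < lam) (hγ : 0 < γ) (hα₀ : 0 < α₀) (hβ : 0 < β) (hμs : 0 < μs)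
    (P : EuclideanSpace ℝ (Fin n) → EuclideanSpace ℝ (Fin n))
    (hP : ∀ z, P z ∈ X ∧ ∀ y ∈ X, ‖z - P z‖ ≤ ‖z - y‖)
    (x₀ : EuclideanSpace ℝ (Fin n)) (hx₀ : x₀ ∈ X)
    (x x' : ℝ → EuclideanSpace ℝ (Fin n))
    (hx0 : x 0 = x₀)
    (hder : ∀ t ∈ Ici (0 : ℝ), HasDerivWithinAt x (x' t) (Ici 0) t)
    (hode : ∀ t ∈ Ici (0 : ℝ),
      x' t = γ • (P (x t - f' (x t) - lam • gradPhi (x t) (muFun α₀ β μs t)) - x t))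
    (hx'c : ContinuousOn x' (Ici 0))
    (hxX : ∀ t ∈ Ici (0 : ℝ), x t ∈ X)
    (hn : 0 < n)
    (Lf : ℝ) (hLf0 : 0 < Lf) (hLf : ∀ y ∈ X, ∀ i, |f' y i| ≤ Lf)
    (hA1 : (∀ i, v i ≠ 0 → μs < v i) ∧
      μs < 3 * lam / (2 * ((⨆ i, v i) + Lf)) ∧ μs < 2 * lam / (n * Lf))
    (xbar : EuclideanSpace ℝ (Fin n))
    (hacc : ∃ u : ℕ → ℝ, Tendsto u atTop atTop ∧ Tendsto (fun k => x (u k)) atTop (nhds xbar))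
    (Xbar : Set (EuclideanSpace ℝ (Fin n)))
    (hXbar : Xbar = {y : EuclideanSpace ℝ (Fin n) | y ∈ X ∧
      ∀ i, 0 ≤ xbar i → xbar i < μs / 2 → y i = 0})
    (Pbar : EuclideanSpace ℝ (Fin n) → EuclideanSpace ℝ (Fin n))
    (hPbar : ∀ z, Pbar z ∈ Xbar ∧ ∀ y ∈ Xbar, ‖z - Pbar z‖ ≤ ‖z - y‖)
    (xstar : EuclideanSpace ℝ (Fin n))
    (hmin : xstar ∈ Xbar ∧ ∀ y ∈ Xbar, f xstar ≤ f y)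
    (hfix : xstar = Pbar (xstar - f' xstar)) :
    IsLocalMinOn (fun y => f y + lam * (norm0 y : ℝ)) X xstar ∧
    ({i | μs / 6 ≤ xbar i ∧ xbar i < μs / 2}.Nonempty →
      norm0 xstar < norm0 xbar ∧
      f xstar + lam * (norm0 xstar : ℝ) < f xbar + lam * (norm0 xbar : ℝ)) :=
  stmt18_general v X hX f f' hf lam μs hlam hμs x hxX hn Lf hLf0 hLf hA1 xbar hacc Xbar hXbar xstar
    hmin
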